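/- arXiv:2103.16309 — 2 statements merged into one kernel-verified Lean document; each statement's English description precedes it below -/
import Mathlib

section
/- For every vertex t of a skew-symmetrizable matrix pattern, the G- and C-matrices satisfy the first duality G_t B_t = B⁰ C_t. -/
open Matrix

namespace ClusterPattern

variable {ι : Type*} [Fintype ι] [DecidableEq ι]

/-- Entrywise positive part `[A]₊`. -/
def posPart (A : Matrix ι ι ℤ) : Matrix ι ι ℤ := Matrix.of fun i j => max (A i j) 0

/-- `A^{•k}`: all columns other than the `k`-th set to `0`. -/
def colSel (k : ι) (A : Matrix ι ι ℤ) : Matrix ι ι ℤ :=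
  Matrix.of fun i j => if j = k then A i j else 0

/-- `A^{k•}`: all rows other than the `k`-th set to `0`. -/
def rowSel (k : ι) (A : Matrix ι ι ℤ) : Matrix ι ι ℤ :=
  Matrix.of fun i j => if i = k then A i j else 0

/-- `J_k`: identity with `k`-th diagonal entry replaced by `-1`. -/
def Jmat (k : ι) : Matrix ι ι ℤ := Matrix.diagonal fun i => if i = k then -1 else 1

/-- A skew-symmetrizable integer matrix. -/
def IsSkewSymmetrizable (B : Matrix ι ι ℤ) : Prop :=
  ∃ D : ι → ℚ, (∀ i, 0 < D i) ∧ ∀ i j, D i * (B i j : ℚ) = -(D j * (B j i : ℚ))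

/-- Matrix mutation `μ_k`. -/
def mutate (k : ι) (B : Matrix ι ι ℤ) : Matrix ι ι ℤ :=
  Matrix.of fun i j => if i = k ∨ j = k then -B i j
    else B i j + B i k * max (B k j) 0 + max (-B i k) 0 * B k j

/-- The exchange matrix `B_t` at the vertex reached from `B0` along the path `w`. -/
def Bmat (B0 : Matrix ι ι ℤ) (w : List ι) : Matrix ι ι ℤ :=
  w.foldl (fun B k => mutate k B) B0

/-- One mutation step of a `C`-matrix. -/
def Cstep (B C : Matrix ι ι ℤ) (k : ι) : Matrix ι ι ℤ :=
  C * Jmat k + C * rowSel k (posPart B) + colSel k (posPart (-C)) * B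

/-- One mutation step of a `G`-matrix. -/
def Gstep (B0 B C G : Matrix ι ι ℤ) (k : ι) : Matrix ι ι ℤ :=
  G * Jmat k + G * colSel k (posPart (-B)) - B0 * colSel k (posPart (-C))

/-- The `C`-matrix `C_t` at the vertex reached from the initial matrix `B0` along `w`. -/
def Cmat (B0 : Matrix ι ι ℤ) (w : List ι) : Matrix ι ι ℤ :=
  (w.foldl (fun p k => (mutate k p.1, Cstep p.1 p.2 k))
    ((B0, 1) : Matrix ι ι ℤ × Matrix ι ι ℤ)).2

/-- The `G`-matrix `G_t` at the vertex reached from the initial matrix `B0` along `w`. -/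
def Gmat (B0 : Matrix ι ι ℤ) (w : List ι) : Matrix ι ι ℤ :=
  (w.foldl (fun p k => (mutate k p.1, Cstep p.1 p.2.1 k, Gstep B0 p.1 p.2.1 p.2.2 k))
    ((B0, 1, 1) : Matrix ι ι ℤ × Matrix ι ι ℤ × Matrix ι ι ℤ)).2.2

/-- A nonzero integer vector with all entries nonnegative. -/
def IsPositiveVec (v : ι → ℤ) : Prop := v ≠ 0 ∧ ∀ i, 0 ≤ v i

/-- A nonzero integer vector with all entries nonpositive. -/
def IsNegativeVec (v : ι → ℤ) : Prop := v ≠ 0 ∧ ∀ i, v i ≤ 0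

/-- Every column is a positive or a negative vector. -/
def ColSignCoherent (M : Matrix ι ι ℤ) : Prop :=
  ∀ j, IsPositiveVec (fun i => M i j) ∨ IsNegativeVec (fun i => M i j)

/-- Every row is a positive or a negative vector. -/
def RowSignCoherent (M : Matrix ι ι ℤ) : Prop :=
  ∀ i, IsPositiveVec (fun j => M i j) ∨ IsNegativeVec (fun j => M i j)



set_option linter.unusedSectionVars false

lemma key (B : Matrix ι ι ℤ) (k l j : ι) (hkk : B k k = 0) :
    (if l = k then (-1:ℤ) else 1) * (mutate k B l j) - max (-(B l k)) 0 * B k j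
      = (if j = k then (-1:ℤ) else 1) * B l j + B l k * max (B k j) 0 := by
  unfold mutate
  by_cases hl : l = k <;> by_cases hj : j = k <;> simp [hl, hj, hkk] <;> ring

lemma mul_Jmat_apply (M : Matrix ι ι ℤ) (k i j : ι) :
    (M * Jmat k) i j = (if j = k then -1 else 1) * M i j := by
  simp [Jmat, Matrix.mul_diagonal, mul_comm]

lemma mul_colSel_apply (M A : Matrix ι ι ℤ) (k i j : ι) :
    (M * colSel k A) i j = if j = k then (M * A) i k else 0 := by
  by_cases hj : j = k <;>
    simp [Matrix.mul_apply, colSel, hj, Finset.sum_ite_eq]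

lemma mul_rowSel_apply (M A : Matrix ι ι ℤ) (k i j : ι) :
    (M * rowSel k A) i j = M i k * A k j := by
  simp [Matrix.mul_apply, rowSel, mul_ite, ite_mul, mul_zero, zero_mul, Finset.sum_ite_eq]

lemma colSel_mul_apply (A M : Matrix ι ι ℤ) (k i j : ι) :
    (colSel k A * M) i j = A i k * M k j := by
  simp [Matrix.mul_apply, colSel, ite_mul, zero_mul, Finset.sum_ite_eq]

lemma mul_colSel_mul_apply (M A N : Matrix ι ι ℤ) (k i j : ι) :
    (M * (colSel k A * N)) i j = (M * A) i k * N k j := by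
  rw [Matrix.mul_apply, Matrix.mul_apply, Finset.sum_mul]
  exact Finset.sum_congr rfl fun x _ => by rw [colSel_mul_apply]; ring

lemma mutate_row_apply (B : Matrix ι ι ℤ) (k j : ι) : mutate k B k j = -(B k j) := by
  simp [mutate]

lemma step_lemma (B0 B C G : Matrix ι ι ℤ) (k : ι) (hkk : B k k = 0)
    (hGB : G * B = B0 * C) :
    Gstep B0 B C G k * mutate k B = B0 * Cstep B C k := by
  ext i j
  rw [Matrix.mul_apply]
  unfold Gstep
  simp only [Matrix.add_apply, Matrix.sub_apply, mul_Jmat_apply, mul_colSel_apply]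
  unfold Cstep
  rw [Matrix.mul_add, Matrix.mul_add, Matrix.add_apply, Matrix.add_apply, ← Matrix.mul_assoc,
    ← Matrix.mul_assoc, ← hGB, mul_Jmat_apply, mul_rowSel_apply, mul_colSel_mul_apply]
  set X := (G * posPart (-B)) i k with hX
  set Y := (B0 * posPart (-C)) i k with hY
  have L : ∀ x, (((if x = k then (-1:ℤ) else 1) * G i x + (if x = k then X else 0))
        - (if x = k then Y else 0)) * mutate k B x j
      = (if x = k then (-1:ℤ) else 1) * G i x * mutate k B x j
        + (if x = k then (X - Y) * mutate k B x j else 0) := fun x => by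
    by_cases hx : x = k <;> simp [hx] <;> ring
  rw [Finset.sum_congr rfl fun x _ => L x, Finset.sum_add_distrib,
    Finset.sum_ite_eq' Finset.univ k, mutate_row_apply]
  simp only [Finset.mem_univ, if_true]
  rw [hX, hY, Matrix.mul_apply (M := G) (N := posPart (-B))]
  rw [show (G * B) i j = ∑ x : ι, G i x * B x j from Matrix.mul_apply]
  rw [show (G * B) i k = ∑ x : ι, G i x * B x k from Matrix.mul_apply]
  simp only [posPart, Matrix.of_apply, Matrix.neg_apply]
  have hsum : ∑ x : ι, ((if x = k then (-1:ℤ) else 1) * G i x * mutate k B x j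
        + G i x * max (-(B x k)) 0 * (-(B k j)))
      = ∑ x : ι, ((if j = k then (-1:ℤ) else 1) * (G i x * B x j)
        + G i x * B x k * max (B k j) 0) :=
    Finset.sum_congr rfl fun x _ => by linear_combination G i x * key B k x j hkk
  simp only [Finset.sum_add_distrib, ← Finset.sum_mul, ← Finset.mul_sum] at hsum
  linear_combination hsum

lemma skew_mutate (D : ι → ℚ) (hD : ∀ i, 0 < D i) (B : Matrix ι ι ℤ)
    (h : ∀ i j, D i * (B i j : ℚ) = -(D j * (B j i : ℚ))) (k : ι) :
    ∀ i j, D i * ((mutate k B i j : ℤ) : ℚ) = -(D j * ((mutate k B j i : ℤ) : ℚ)) := by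
  intro i j
  unfold mutate
  simp only [Matrix.of_apply]
  by_cases hij : i = k ∨ j = k
  · rw [if_pos hij, if_pos hij.symm]
    push_cast; linarith [h i j]
  · push_neg at hij
    rw [if_neg (by tauto), if_neg (by tauto)]
    have m1 : D i * max (-(B i k : ℚ)) 0 = D k * max ((B k i : ℚ)) 0 := by
      rw [mul_max_of_nonneg _ _ (hD i).le, mul_max_of_nonneg _ _ (hD k).le, mul_zero, mul_zero,
        mul_neg, h i k, neg_neg]
    have m2 : D j * max (-(B j k : ℚ)) 0 = D k * max ((B k j : ℚ)) 0 := by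
      rw [mul_max_of_nonneg _ _ (hD j).le, mul_max_of_nonneg _ _ (hD k).le, mul_zero, mul_zero,
        mul_neg, h j k, neg_neg]
    push_cast [Int.cast_max]
    linear_combination h i j + max ((B k j:ℚ)) 0 * h i k + (B k j:ℚ) * m1
      + max ((B k i:ℚ)) 0 * h j k + (B k i:ℚ) * m2

lemma diag_zero (D : ι → ℚ) (hD : ∀ i, 0 < D i) (B : Matrix ι ι ℤ)
    (h : ∀ i j, D i * (B i j : ℚ) = -(D j * (B j i : ℚ))) (k : ι) : B k k = 0 := by
  have h2 : D k * (B k k : ℚ) = 0 := by linarith [h k k]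
  rcases mul_eq_zero.mp h2 with h3 | h3
  · exact absurd h3 (hD k).ne'
  · exact_mod_cast h3

/-- The triple fold used by `Gmat`. -/
def tfold (B0 : Matrix ι ι ℤ) (w : List ι) (p : Matrix ι ι ℤ × Matrix ι ι ℤ × Matrix ι ι ℤ) :
    Matrix ι ι ℤ × Matrix ι ι ℤ × Matrix ι ι ℤ :=
  w.foldl (fun p k => (mutate k p.1, Cstep p.1 p.2.1 k, Gstep B0 p.1 p.2.1 p.2.2 k)) p

lemma tfold_fst (B0 : Matrix ι ι ℤ) (w : List ι) :
    ∀ p : Matrix ι ι ℤ × Matrix ι ι ℤ × Matrix ι ι ℤ,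
      (tfold B0 w p).1 = w.foldl (fun B k => mutate k B) p.1 := by
  induction w with
  | nil => intro p; rfl
  | cons k w ih => intro p; exact ih _

lemma tfold_snd (B0 : Matrix ι ι ℤ) (w : List ι) :
    ∀ p : Matrix ι ι ℤ × Matrix ι ι ℤ × Matrix ι ι ℤ,
      (tfold B0 w p).2.1
        = (w.foldl (fun q k => (mutate k q.1, Cstep q.1 q.2 k)) (p.1, p.2.1)).2 := by
  induction w with
  | nil => intro p; rfl
  | cons k w ih => intro p; exact ih _

lemma tfold_inv (B0 : Matrix ι ι ℤ) (D : ι → ℚ) (hD : ∀ i, 0 < D i) (w : List ι) :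
    ∀ p : Matrix ι ι ℤ × Matrix ι ι ℤ × Matrix ι ι ℤ,
      (∀ i j, D i * (p.1 i j : ℚ) = -(D j * (p.1 j i : ℚ))) →
      p.2.2 * p.1 = B0 * p.2.1 →
      (∀ i j, D i * ((tfold B0 w p).1 i j : ℚ) = -(D j * ((tfold B0 w p).1 j i : ℚ))) ∧
        (tfold B0 w p).2.2 * (tfold B0 w p).1 = B0 * (tfold B0 w p).2.1 := by
  induction w with
  | nil => intro p h1 h2; exact ⟨h1, h2⟩
  | cons k w ih =>
    intro p h1 h2
    exact ih _ (skew_mutate D hD p.1 h1 k)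
      (step_lemma B0 p.1 p.2.1 p.2.2 k (diag_zero D hD p.1 h1 k) h2)

/-- **First duality**: `G_t B_t = B⁰ C_t` for every vertex `t`. -/
theorem first_duality (n : ℕ) (hn : 1 ≤ n) (B0 : Matrix (Fin n) (Fin n) ℤ)
    (hB0 : IsSkewSymmetrizable B0) (w : List (Fin n)) :
    Gmat B0 w * Bmat B0 w = B0 * Cmat B0 w := by
  obtain ⟨D, hD, hsk⟩ := hB0
  have h := tfold_inv B0 D hD w (B0, 1, 1) hsk (by rw [one_mul, mul_one])
  have hG : Gmat B0 w = (tfold B0 w (B0, 1, 1)).2.2 := rfl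
  have hB : Bmat B0 w = (tfold B0 w (B0, 1, 1)).1 := (tfold_fst B0 w (B0, 1, 1)).symm
  have hC : Cmat B0 w = (tfold B0 w (B0, 1, 1)).2.1 := (tfold_snd B0 w (B0, 1, 1)).symm
  rw [hG, hB, hC]; exact h.2

end ClusterPattern
end

section
/- Assume the sign-coherence property holds for the pattern, and let D be a skew-symmetrizer of B⁰. Then for every vertex t, C_tᵀ (D B⁰) C_ت = D B_t; that is, the C-matrix transforms the skew-symmetric form D B⁰ into D B_t. -/
/-! If the `k`-th column of `C_t` has sign `ε`, the `C`-matrix recursion becomes right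
multiplication, `C_{t'} = C_t F_ε` with `F_ε = J_k + [ε B_t]₊^{k•}`. Matrix mutation factors as
`μ_k(B) = E_ε B F_ε` with `E_ε = J_k + [-ε B]₊^{•k}`, and a skew-symmetrizer intertwines the two
factors, `D E_ε = F_εᵀ D`. Hence `F_εᵀ (D B_t) F_ε = D B_{t'}`, and the identity propagates along
the path; the skew-symmetry of `D B_t` needed at each step is inherited from `D B⁰` by congruence. -/

open Matrix

namespace ClusterPattern

variable {ι : Type*}

lemma map_intCast_mul [Fintype ι] {R : Type*} [Ring R] (L M : Matrix ι ι ℤ) :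
    (L * M).map (Int.cast : ℤ → R) = L.map Int.cast * M.map Int.cast :=
  Matrix.map_mul (f := Int.castRingHom R)

lemma transpose_mul_mul_self_eq_neg [Fintype ι] {S : Matrix ι ι ℚ} (hS : Sᵀ = -S)
    (M : Matrix ι ι ℚ) : (Mᵀ * S * M)ᵀ = -(Mᵀ * S * M) := by
  simp [transpose_mul, hS, Matrix.mul_assoc]

lemma ColSignCoherent.exists_sign {C : Matrix ι ι ℤ} (hC : ColSignCoherent C) (k : ι) :
    ∃ ε : ℤ, (ε = 1 ∨ ε = -1) ∧ ∀ i, 0 ≤ ε * C i k := by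
  rcases hC k with ⟨-, hpos⟩ | ⟨-, hneg⟩
  · exact ⟨1, .inl rfl, fun i => by simpa using hpos i⟩
  · exact ⟨-1, .inr rfl, fun i => by simpa using hneg i⟩

section DecidableEq

variable [DecidableEq ι]

def Fmat (k : ι) (ε : ℤ) (B : Matrix ι ι ℤ) : Matrix ι ι ℤ :=
  Jmat k + rowSel k (posPart (ε • B))

def Emat (k : ι) (ε : ℤ) (B : Matrix ι ι ℤ) : Matrix ι ι ℤ :=
  Jmat k + colSel k (posPart (-ε • B))

lemma Fmat_apply (k : ι) (ε : ℤ) (B : Matrix ι ι ℤ) (i j : ι) :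
    Fmat k ε B i j = Jmat k i j + if i = k then max (ε * B k j) 0 else 0 := by
  rcases eq_or_ne i k with rfl | hik <;> simp [Fmat, rowSel, posPart, *]

lemma Emat_apply (k : ι) (ε : ℤ) (B : Matrix ι ι ℤ) (i j : ι) :
    Emat k ε B i j = Jmat k i j + if j = k then max (-ε * B i k) 0 else 0 := by
  rcases eq_or_ne j k with rfl | hjk <;> simp [Emat, colSel, posPart, *]

lemma Bmat_append (B0 : Matrix ι ι ℤ) (w : List ι) (k : ι) :
    Bmat B0 (w ++ [k]) = mutate k (Bmat B0 w) := by
  simp [Bmat, List.foldl_append]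

variable [Fintype ι]

lemma mul_Fmat_apply (M : Matrix ι ι ℤ) (k : ι) (ε : ℤ) (B : Matrix ι ι ℤ) (i j : ι) :
    (M * Fmat k ε B) i j = M i j * (if j = k then -1 else 1) + M i k * max (ε * B k j) 0 := by
  simp only [Fmat, Jmat, Matrix.mul_add, Matrix.add_apply, Matrix.mul_diagonal]
  simp [rowSel, posPart, Matrix.mul_apply]

lemma Emat_mul_apply (M : Matrix ι ι ℤ) (k : ι) (ε : ℤ) (B : Matrix ι ι ℤ) (i j : ι) :
    (Emat k ε B * M) i j = (if i = k then -1 else 1) * M i j + max (-ε * B i k) 0 * M k j := by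
  simp only [Emat, Jmat, Matrix.add_mul, Matrix.add_apply, Matrix.diagonal_mul]
  simp [colSel, posPart, Matrix.mul_apply]

lemma Cstep_apply (B C : Matrix ι ι ℤ) (k i j : ι) :
    Cstep B C k i j =
      C i j * (if j = k then -1 else 1) + C i k * max (B k j) 0 + max (-C i k) 0 * B k j := by
  simp [Cstep, Matrix.mul_apply, Jmat, rowSel, colSel, posPart, Matrix.diagonal,
    mul_ite, ite_mul, Finset.sum_ite_eq']

lemma Cstep_eq_mul_Fmat {B C : Matrix ι ι ℤ} {k : ι} {ε : ℤ} (hε : ε = 1 ∨ ε = -1)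
    (hCk : ∀ i, 0 ≤ ε * C i k) : Cstep B C k = C * Fmat k ε B := by
  ext i j
  rw [Cstep_apply, mul_Fmat_apply]
  rcases hε with rfl | rfl
  · rw [max_eq_right (by linarith [hCk i] : -C i k ≤ 0)]
    simp
  · rw [max_eq_left (by linarith [hCk i] : (0 : ℤ) ≤ -C i k)]
    simp only [neg_mul, one_mul]
    linear_combination C i k * posPart_sub_negPart (B k j)

lemma mutate_eq_Emat_mul_mul_Fmat {B : Matrix ι ι ℤ} {k : ι} (hkk : B k k = 0) {ε : ℤ}
    (hε : ε = 1 ∨ ε = -1) : mutate k B = Emat k ε B * B * Fmat k ε B := by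
  ext i j
  rw [mul_Fmat_apply, Emat_mul_apply, Emat_mul_apply, hkk]
  by_cases hik : i = k <;> by_cases hjk : j = k
  all_goals simp [mutate, hik, hjk, hkk]
  rcases hε with rfl | rfl
  · simp only [one_mul]; ring
  · simp only [neg_neg, one_mul, neg_mul]
    linear_combination B i k * posPart_sub_negPart (B k j) - B k j * posPart_sub_negPart (B i k)

lemma transpose_diagonal_mul_map_eq_neg_iff (D : ι → ℚ) (B : Matrix ι ι ℤ) :
    (diagonal D * B.map (Int.cast : ℤ → ℚ))ᵀ = -(diagonal D * B.map (Int.cast : ℤ → ℚ)) ↔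
      ∀ i j, D i * (B i j : ℚ) = -(D j * (B j i : ℚ)) := by
  simp only [← Matrix.ext_iff, transpose_apply, Matrix.neg_apply, diagonal_mul, map_apply]
  exact ⟨fun h i j => h j i, fun h i j => h j i⟩

lemma diagonal_mul_map_Emat {B : Matrix ι ι ℤ} {D : ι → ℚ} (hD : ∀ i, 0 < D i)
    (hskew : ∀ i j, D i * (B i j : ℚ) = -(D j * (B j i : ℚ))) (k : ι) (ε : ℤ) :
    diagonal D * (Emat k ε B).map (Int.cast : ℤ → ℚ) =
      ((Fmat k ε B).map (Int.cast : ℤ → ℚ))ᵀ * diagonal D := by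
  have hJ : ∀ i j, D i * (Jmat k i j : ℚ) = (Jmat k j i : ℚ) * D j := by
    intro i j
    by_cases hij : i = j
    · subst hij; exact mul_comm _ _
    · simp [Jmat, hij, Ne.symm hij]
  -- positive scalars commute with `[·]₊`, and `D_i (-ε b_ik) = ε D_k b_ki`
  have hcol : ∀ i, D i * ((max (-ε * B i k) 0 : ℤ) : ℚ) = ((max (ε * B k i) 0 : ℤ) : ℚ) * D k := by
    intro i
    push_cast
    rw [mul_max_of_nonneg _ _ (hD i).le, max_mul_of_nonneg _ _ (hD k).le, mul_zero, zero_mul]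
    congr 1
    linear_combination (-ε : ℚ) * hskew i k
  ext i j
  rw [diagonal_mul, mul_diagonal, transpose_apply, map_apply, map_apply, Emat_apply, Fmat_apply]
  push_cast
  rw [mul_add, add_mul, hJ]
  congr 1
  split_ifs with hjk
  · subst hjk
    exact_mod_cast hcol i
  · simp

lemma Fmat_transpose_mul_mul_Fmat {B : Matrix ι ι ℤ} {D : ι → ℚ} (hD : ∀ i, 0 < D i)
    (hskew : ∀ i j, D i * (B i j : ℚ) = -(D j * (B j i : ℚ))) (k : ι) {ε : ℤ}
    (hε : ε = 1 ∨ ε = -1) :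
    ((Fmat k ε B).map (Int.cast : ℤ → ℚ))ᵀ * (diagonal D * B.map (Int.cast : ℤ → ℚ)) *
        (Fmat k ε B).map (Int.cast : ℤ → ℚ) =
      diagonal D * (mutate k B).map (Int.cast : ℤ → ℚ) := by
  have hkk : B k k = 0 := by
    have : D k * (B k k : ℚ) = 0 := by linarith [hskew k k]
    exact_mod_cast (mul_eq_zero.mp this).resolve_left (hD k).ne'
  rw [mutate_eq_Emat_mul_mul_Fmat hkk hε, map_intCast_mul, map_intCast_mul,
    ← Matrix.mul_assoc (diagonal D), ← Matrix.mul_assoc (diagonal D),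
    diagonal_mul_map_Emat hD hskew]
  simp only [Matrix.mul_assoc]

lemma foldl_mutate_Cstep_fst (w : List ι) (p : Matrix ι ι ℤ × Matrix ι ι ℤ) :
    (w.foldl (fun p k => (mutate k p.1, Cstep p.1 p.2 k)) p).1 = Bmat p.1 w := by
  induction w generalizing p with
  | nil => rfl
  | cons k w ih => exact ih _

lemma Cmat_append (B0 : Matrix ι ι ℤ) (w : List ι) (k : ι) :
    Cmat B0 (w ++ [k]) = Cstep (Bmat B0 w) (Cmat B0 w) k := by
  simp only [Cmat, List.foldl_append, List.foldl_cons, List.foldl_nil, foldl_mutate_Cstep_fst]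

end DecidableEq

theorem C_transforms_skew_form_general (n : ℕ)
    (B0 : Matrix (Fin n) (Fin n) ℤ) (D : Fin n → ℚ) (hD : ∀ i, 0 < D i)
    (hDB0 : ∀ i j, D i * (B0 i j : ℚ) = -(D j * (B0 j i : ℚ)))
    (hsc : ∀ w : List (Fin n), ColSignCoherent (Cmat B0 w))
    (w : List (Fin n)) :
    ((Cmat B0 w).map (Int.cast : ℤ → ℚ))ᵀ *
        (Matrix.diagonal D * B0.map (Int.cast : ℤ → ℚ)) *
        (Cmat B0 w).map (Int.cast : ℤ → ℚ) =
      Matrix.diagonal D * (Bmat B0 w).map (Int.cast : ℤ → ℚ) := by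
  induction w using List.reverseRecOn with
  | nil => simp [Cmat, Bmat]
  | append_singleton w k ih =>
    have hskew : ∀ i j, D i * (Bmat B0 w i j : ℚ) = -(D j * (Bmat B0 w j i : ℚ)) := by
      rw [← transpose_diagonal_mul_map_eq_neg_iff, ← ih]
      exact transpose_mul_mul_self_eq_neg ((transpose_diagonal_mul_map_eq_neg_iff D B0).mpr hDB0) _
    obtain ⟨ε, hε, hCk⟩ := (hsc w).exists_sign k
    rw [Cmat_append, Bmat_append, Cstep_eq_mul_Fmat hε hCk, map_intCast_mul, transpose_mul,
      ← Fmat_transpose_mul_mul_Fmat hD hskew k hε, ← ih]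
    simp only [Matrix.mul_assoc]

/-- The `C`-matrix transforms the skew-symmetric form `D B⁰` into `D B_t`. -/
theorem C_transforms_skew_form (n : ℕ) (hn : 1 ≤ n)
    (B0 : Matrix (Fin n) (Fin n) ℤ) (D : Fin n → ℚ) (hD : ∀ i, 0 < D i)
    (hDB0 : ∀ i j, D i * (B0 i j : ℚ) = -(D j * (B0 j i : ℚ)))
    (hsc : ∀ w : List (Fin n), ColSignCoherent (Cmat B0 w))
    (w : List (Fin n)) :
    ((Cmat B0 w).map (Int.cast : ℤ → ℚ))ᵀ *
        (Matrix.diagonal D * B0.map (Int.cast : ℤ → ℚ)) *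
        (Cmat B0 w).map (Int.cast : ℤ → ℚ) =
      Matrix.diagonal D * (Bmat B0 w).map (Int.cast : ℤ → ℚ) :=
  C_transforms_skew_form_general n B0 D hD hDB0 hsc w

end ClusterPattern
end
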